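/- (Lemma 5.5, Tsuji vs. Nevanlinna characteristics) Let v be a subharmonic function on ℂ. Define the Nevanlinna characteristic T(r,v) = (1/2π)∫₀^{2π} v⁺(r e^{iθ}) dθ and the Tsuji characteristic 𝔗(r,v) = (1/2π)∫₀^{2π} v⁺(r|sin θ| e^{iθ}) dθ/(r sin²θ). Then for every R > 0, ∫_R^∞ T(r,v)/r³ dr ≤ ∫_R^∞ 𝔗(r,v)/r² dr. -/

import Mathlib

open MeasureTheory

/-- `v` is subharmonic on `ℂ`: upper semicontinuous and satisfying the sub-mean value
inequality on every circle. -/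
def Subharmonic (v : ℂ → ℝ) : Prop :=
  UpperSemicontinuous v ∧
    ∀ z : ℂ, ∀ r : ℝ, 0 < r →
      v z ≤ (2 * Real.pi)⁻¹ *
        ∫ θ in (0:ℝ)..(2 * Real.pi), v (z + (r : ℂ) * Complex.exp ((θ : ℂ) * Complex.I))

/-!
Both sides are iterated integrals in `(r, θ)`, so by Tonelli it suffices to compare the inner
`r`-integrals for each fixed `θ` with `s = |sin θ| > 0` (a.e. `θ`). The substitution `ρ = s r`
turns the Tsuji integrand `v⁺(s r e^{iθ}) / (r³ s²) dr` into `v⁺(ρ e^{iθ}) / ρ³ dρ` on `ρ > s R`,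
which contains `ρ > R` because `s ≤ 1`: this is the inclusion `K_R ⊆ Ω_R` in polar coordinates.
-/

open Set
open scoped ENNReal

theorem setLIntegral_Ioi_comp_mul_left (g : ℝ → ℝ≥0∞) (a : ℝ) {b : ℝ} (hb : 0 < b) :
    ∫⁻ x in Ioi a, g (b * x) = ENNReal.ofReal b⁻¹ * ∫⁻ x in Ioi (b * a), g x := by
  have hpre : (b * ·) ⁻¹' Ioi (b * a) = Ioi a := by
    rw [preimage_const_mul_Ioi₀ _ hb, mul_div_cancel_left₀ _ hb.ne']
  rw [← (measurableEmbedding_mulLeft₀ hb.ne').lintegral_map, ← hpre,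
    ← Measure.restrict_map (measurable_const_mul b) measurableSet_Ioi,
    Real.map_volume_mul_left hb.ne', Measure.restrict_smul, lintegral_smul_measure,
    abs_of_pos (inv_pos.2 hb), smul_eq_mul]

theorem setLIntegral_Ioi_div_pow_three_le (f : ℝ → ℝ≥0∞) {R s : ℝ} (hR : 0 ≤ R)
    (hs₀ : 0 < s) (hs₁ : s ≤ 1) :
    ∫⁻ r in Ioi R, f r / ENNReal.ofReal (r ^ 3) ≤
      ∫⁻ r in Ioi R, f (r * s) * ENNReal.ofReal (1 / (r * s ^ 2)) / ENNReal.ofReal (r ^ 2) := by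
  set g : ℝ → ℝ≥0∞ := fun x => ENNReal.ofReal s * (f x / ENNReal.ofReal (x ^ 3))
  have hsubst : ∀ r ∈ Ioi R,
      f (r * s) * ENNReal.ofReal (1 / (r * s ^ 2)) / ENNReal.ofReal (r ^ 2) = g (s * r) := by
    intro r hr
    have hr : 0 < r := hR.trans_lt hr
    simp only [g, mul_comm r s, mul_div_assoc, ← mul_div_assoc (ENNReal.ofReal s),
      mul_comm (ENNReal.ofReal s),
      ← ENNReal.ofReal_div_of_pos (by positivity : (0:ℝ) < r ^ 2),
      ← ENNReal.ofReal_div_of_pos (by positivity : (0:ℝ) < (s * r) ^ 3)]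
    congr 2
    field_simp
  calc ∫⁻ r in Ioi R, f r / ENNReal.ofReal (r ^ 3)
      ≤ ∫⁻ r in Ioi (s * R), f r / ENNReal.ofReal (r ^ 3) :=
        lintegral_mono_set (Ioi_subset_Ioi (mul_le_of_le_one_left hR hs₁))
    _ = ENNReal.ofReal s⁻¹ * ∫⁻ x in Ioi (s * R), g x := by
        rw [lintegral_const_mul' _ _ ENNReal.ofReal_ne_top, ← mul_assoc,
          ← ENNReal.ofReal_mul (inv_nonneg.2 hs₀.le), inv_mul_cancel₀ hs₀.ne',
          ENNReal.ofReal_one, one_mul]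
    _ = _ := by
        rw [← setLIntegral_Ioi_comp_mul_left g R hs₀]
        exact (setLIntegral_congr_fun measurableSet_Ioi hsubst).symm

theorem lintegral_div_div_comm {α β : Type*} [MeasurableSpace α] [MeasurableSpace β]
    {μ : Measure α} {ν : Measure β} [SFinite μ] [SFinite ν] {G : α → β → ℝ≥0∞}
    (hG : Measurable (Function.uncurry G)) {w : α → ℝ≥0∞} (hw : Measurable w) (c : ℝ≥0∞) :
    ∫⁻ a, (∫⁻ b, G a b ∂ν) / c / w a ∂μ = ∫⁻ b, (∫⁻ a, G a b / w a ∂μ) / c ∂ν := by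
  simp only [div_eq_mul_inv]
  calc ∫⁻ a, (∫⁻ b, G a b ∂ν) * c⁻¹ * (w a)⁻¹ ∂μ
      = ∫⁻ a, ∫⁻ b, G a b * (w a)⁻¹ * c⁻¹ ∂ν ∂μ := by
        refine lintegral_congr fun a => ?_
        rw [lintegral_mul_const _ (by fun_prop), lintegral_mul_const _ (by fun_prop)]
        ring
    _ = ∫⁻ b, ∫⁻ a, G a b * (w a)⁻¹ * c⁻¹ ∂μ ∂ν :=
        lintegral_lintegral_swap (by fun_prop)
    _ = _ := lintegral_congr fun b => lintegral_mul_const _ (by fun_prop)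

theorem ae_sin_ne_zero : ∀ᵐ θ : ℝ, Real.sin θ ≠ 0 := by
  have hsub : {θ : ℝ | Real.sin θ = 0} ⊆ range fun n : ℤ => (n : ℝ) * Real.pi :=
    fun θ hθ => Real.sin_eq_zero_iff.1 hθ
  exact measure_mono_null (fun θ hθ => hsub (not_not.1 hθ)) ((countable_range _).measure_zero _)

noncomputable def polarPosPart (v : ℂ → ℝ) (r θ : ℝ) : ℝ≥0∞ :=
  ENNReal.ofReal (max (v ((r : ℂ) * Complex.exp ((θ : ℂ) * Complex.I))) 0)

theorem measurable_polarPosPart {v : ℂ → ℝ} (hv : Measurable v) :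
    Measurable (Function.uncurry (polarPosPart v)) := by
  unfold polarPosPart Function.uncurry
  fun_prop

/-- Lemma 5.5: for a subharmonic `v` on `ℂ`, with Nevanlinna characteristic
`T(r,v) = (1/2π)∫₀^{2π} v⁺(re^{iθ}) dθ` and Tsuji characteristic
`𝔗(r,v) = (1/2π)∫₀^{2π} v⁺(r|sin θ|e^{iθ}) dθ/(r sin²θ)`, one has
`∫_R^∞ T(r,v)/r³ dr ≤ ∫_R^∞ 𝔗(r,v)/r² dr` for every `R > 0`. -/
theorem stmt_14 (v : ℂ → ℝ) (hv : Subharmonic v) (R : ℝ) (hR : 0 < R) :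
    (∫⁻ r in Set.Ioi R,
        ((∫⁻ θ in Set.Ioc (0:ℝ) (2 * Real.pi),
            ENNReal.ofReal (max (v ((r : ℂ) * Complex.exp ((θ : ℂ) * Complex.I))) 0)) /
          ENNReal.ofReal (2 * Real.pi)) / ENNReal.ofReal (r ^ 3))
      ≤ ∫⁻ r in Set.Ioi R,
        ((∫⁻ θ in Set.Ioc (0:ℝ) (2 * Real.pi),
            ENNReal.ofReal
                (max (v (((r * |Real.sin θ| : ℝ) : ℂ) * Complex.exp ((θ : ℂ) * Complex.I))) 0) *
              ENNReal.ofReal (1 / (r * Real.sin θ ^ 2))) /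
          ENNReal.ofReal (2 * Real.pi)) / ENNReal.ofReal (r ^ 2) := by
  have hF := measurable_polarPosPart hv.1.measurable
  have hG : Measurable fun p : ℝ × ℝ =>
      polarPosPart v (p.1 * |Real.sin p.2|) p.2 * ENNReal.ofReal (1 / (p.1 * Real.sin p.2 ^ 2)) :=
    (hF.comp (f := fun p : ℝ × ℝ => (p.1 * |Real.sin p.2|, p.2)) (by fun_prop)).mul
      (by fun_prop)
  change ∫⁻ r in Ioi R, (∫⁻ θ in Ioc 0 (2 * Real.pi), polarPosPart v r θ) / _ / _ ≤
    ∫⁻ r in Ioi R, (∫⁻ θ in Ioc 0 (2 * Real.pi), polarPosPart v (r * |Real.sin θ|) θ *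
      ENNReal.ofReal (1 / (r * Real.sin θ ^ 2))) / _ / _
  rw [lintegral_div_div_comm hF (by fun_prop), lintegral_div_div_comm hG (by fun_prop)]
  refine lintegral_mono_ae ((ae_restrict_of_ae ae_sin_ne_zero).mono fun θ hθ => ?_)
  gcongr ?_ / _
  simpa only [sq_abs] using setLIntegral_Ioi_div_pow_three_le (polarPosPart v · θ) hR.le
    (abs_pos.2 hθ) (Real.abs_sin_le_one θ)
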